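/- arXiv:2202.07314 — 2 statements merged into one kernel-verified Lean document; each statement's English description precedes it below -/
import Mathlib

section
/- Let 1 ≤ p, q ≤ ∞ with 1/p + 1/q = 1 and (p,q) ≠ (1,∞). Then there is a constant C = C(p) > 0 such that for all measurable ψ₁, ψ₂, ψ₃, ψ₄ : (0,∞) → ℂ, |M_{4,1}(ψ₁,ψ₂,ψ₃,ψ₄)| ≤ C ‖ψ₁ψ₂‖_{L^p} ‖ψ₃ψ₄‖_{L^q} whenever the right-hand side is finite. Moreover, for any 1 ≤ p, q ≤ ∞ with 1/p + 1/q = 1, |M_{4,0}(ψ₁,ψ₂,ψ₃,ψ₄)| ≤ ‖ψ₁ψ₂‖_{L^p} ‖ψ₃ψ₄‖_{L^q}. -/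
open MeasureTheory Set
open scoped ENNReal

/-- The measure `2π r dr` on `(0,∞)`. -/
noncomputable def rmeas : Measure ℝ :=
  (volume.restrict (Set.Ioi (0:ℝ))).withDensity (fun r => ENNReal.ofReal (2 * Real.pi * r))

/-- `Re(conj ψ₁ ψ₂)(r)`. -/
noncomputable def Re2 (ψ₁ ψ₂ : ℝ → ℂ) (r : ℝ) : ℝ := ((starRingEnd ℂ) (ψ₁ r) * ψ₂ r).re

/-- `A_θ[ψ₁,ψ₂](r) = -(1/2)∫₀^r Re(conj ψ₁ ψ₂)(r') r' dr'`. -/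
noncomputable def Atheta2 (ψ₁ ψ₂ : ℝ → ℂ) (r : ℝ) : ℝ :=
  -(1/2) * ∫ t in (0:ℝ)..r, Re2 ψ₁ ψ₂ t * t

/-- `M_{4,0}(ψ₁,ψ₂,ψ₃,ψ₄) = -(1/4)·2π∫₀^∞ Re(conj ψ₁ ψ₂) Re(conj ψ₃ ψ₄) r dr`. -/
noncomputable def M40 (ψ₁ ψ₂ ψ₃ ψ₄ : ℝ → ℂ) : ℝ :=
  -(1/4) * (2 * Real.pi * ∫ r in Set.Ioi (0:ℝ), Re2 ψ₁ ψ₂ r * Re2 ψ₃ ψ₄ r * r)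

/-- `M_{4,1}(ψ₁,ψ₂,ψ₃,ψ₄) = 2π∫₀^∞ r^{-2} A_θ[ψ₁,ψ₂](r) Re(conj ψ₃ ψ₄)(r) r dr`. -/
noncomputable def M41 (ψ₁ ψ₂ ψ₃ ψ₄ : ℝ → ℂ) : ℝ :=
  2 * Real.pi * ∫ r in Set.Ioi (0:ℝ), (r ^ 2)⁻¹ * Atheta2 ψ₁ ψ₂ r * Re2 ψ₃ ψ₄ r * r

/-! Both estimates are Hölder's inequality for the measure `2πr dr`. For `M_{4,1}` write
`F = ψ₁ψ₂` and `G = ψ₃ψ₄`; the bound `|A_θ[ψ₁,ψ₂](r)| ≤ ½∫₀^r |F(t)| t dt` gives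
`|M_{4,1}| ≤ π ∬_{0<t≤r} |F(t)| (t/r) |G(r)| dt dr`. Hölder's inequality on the triangle
`0 < t ≤ r` for `U(t,r) = (t/r) F(t)` and `V(t,r) = G(r)` concludes, since
`∫ₜ^∞ (t/r)^p dr = t/(p-1)` for `p > 1` and `∫₀^r dt = r` turn `‖U‖_p` and `‖V‖_q` into
weighted norms on `r dr` (for `p = ∞` one uses `t/r ≤ 1` instead). -/

open Real

lemma ENNReal.holderConjugate_of_one_div_add_one_div {p q : ℝ≥0∞} (h : 1 / p + 1 / q = 1) :
    p.HolderConjugate q :=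
  ENNReal.holderConjugate_iff.mpr (by simpa only [one_div] using h)

lemma lintegral_enorm_mul_le_eLpNorm_mul_eLpNorm {α 𝕜 : Type*} [MeasurableSpace α]
    [NormedDivisionRing 𝕜] {μ : Measure α} {p q : ℝ≥0∞} [p.HolderConjugate q] {f g : α → 𝕜}
    (hf : AEStronglyMeasurable f μ) (hg : AEStronglyMeasurable g μ) :
    ∫⁻ x, ‖f x‖ₑ * ‖g x‖ₑ ∂μ ≤ eLpNorm f p μ * eLpNorm g q μ := by
  simpa [eLpNorm_one_eq_lintegral_enorm, enorm_mul] using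
    eLpNorm_smul_le_mul_eLpNorm (r := 1) hg hf

lemma lintegral_Ici_div_rpow {p t : ℝ} (hp : 1 < p) (ht : 0 < t) :
    ∫⁻ r in Ici t, ENNReal.ofReal ((t / r) ^ p) = ENNReal.ofReal (t / (p - 1)) := by
  have heq : EqOn (fun r => (t / r) ^ p) (fun r => t ^ p * r ^ (-p)) (Ioi t) :=
    fun r (hr : t < r) => by
      dsimp only
      rw [Real.div_rpow ht.le (ht.trans hr).le, Real.rpow_neg (ht.trans hr).le, div_eq_mul_inv]
  have hint : IntegrableOn (fun r => (t / r) ^ p) (Ioi t) :=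
    IntegrableOn.congr_fun (((integrableOn_Ioi_rpow_of_lt (a := -p) (by linarith) ht).const_mul
      (t ^ p))) heq.symm measurableSet_Ioi
  have hpow : t ^ p * t ^ (-p + 1) = t := by
    rw [← Real.rpow_add ht, add_neg_cancel_left, Real.rpow_one]
  rw [← restrict_Ioi_eq_restrict_Ici, ← ofReal_integral_eq_lintegral_ofReal hint
    (ae_restrict_of_forall_mem measurableSet_Ioi fun r (hr : t < r) =>
      Real.rpow_nonneg (div_nonneg ht.le (ht.trans hr).le) _),
    setIntegral_congr_fun measurableSet_Ioi heq, integral_const_mul,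
    integral_Ioi_rpow_of_lt (by linarith) ht, mul_div_assoc', mul_neg, hpow,
    show -p + 1 = -(p - 1) by ring, neg_div_neg_eq]

lemma lintegral_rmeas (φ : ℝ → ℝ≥0∞) :
    ∫⁻ r, φ r ∂rmeas = ∫⁻ r in Ioi 0, ENNReal.ofReal (2 * π * r) * φ r :=
  lintegral_withDensity_eq_lintegral_mul_non_measurable _ (by fun_prop)
    (ae_of_all _ fun _ => ENNReal.ofReal_lt_top) φ

lemma withDensity_ofReal_le_rmeas :
    (volume.restrict (Ioi 0)).withDensity ENNReal.ofReal ≤ rmeas := by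
  refine withDensity_mono ?_
  filter_upwards [ae_restrict_mem measurableSet_Ioi] with r (hr : 0 < r)
  exact ENNReal.ofReal_le_ofReal (le_mul_of_one_le_left hr.le (by linarith [pi_gt_three]))

lemma ofReal_abs_two_pi_mul_setIntegral_le (h : ℝ → ℝ) :
    ENNReal.ofReal |2 * π * ∫ r in Ioi 0, h r * r| ≤ ∫⁻ r, ‖h r‖ₑ ∂rmeas := by
  rw [← Real.enorm_eq_ofReal_abs, enorm_mul, lintegral_rmeas]
  calc ‖2 * π‖ₑ * ‖∫ r in Ioi 0, h r * r‖ₑ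
      ≤ ENNReal.ofReal (2 * π) * ∫⁻ r in Ioi 0, ‖h r * r‖ₑ := by
        rw [Real.enorm_of_nonneg (by positivity)]
        gcongr
        exact enorm_integral_le_lintegral_enorm _
    _ = ∫⁻ r in Ioi 0, ENNReal.ofReal (2 * π * r) * ‖h r‖ₑ := by
        rw [← lintegral_const_mul' _ _ ENNReal.ofReal_ne_top]
        refine setLIntegral_congr_fun measurableSet_Ioi fun r (hr : 0 < r) => ?_
        rw [enorm_mul, Real.enorm_of_nonneg hr.le, ENNReal.ofReal_mul (p := 2 * π) (by positivity)]
        ring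

def triangle : Set (ℝ × ℝ) := {z | 0 < z.1 ∧ z.1 ≤ z.2}

lemma measurableSet_triangle : MeasurableSet triangle :=
  (measurableSet_lt measurable_const measurable_fst).inter
    (measurableSet_le measurable_fst measurable_snd)

lemma setLIntegral_triangle_eq_Ioi_Ioc {f : ℝ × ℝ → ℝ≥0∞} (hf : Measurable f) :
    ∫⁻ z in triangle, f z = ∫⁻ r in Ioi 0, ∫⁻ t in Ioc 0 r, f (t, r) := by
  rw [← lintegral_indicator measurableSet_triangle, Measure.volume_eq_prod,
    lintegral_prod_symm' _ (hf.indicator measurableSet_triangle),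
    ← lintegral_indicator measurableSet_Ioi]
  congr 1 with r
  by_cases hr : 0 < r
  · rw [indicator_of_mem (show r ∈ Ioi 0 from hr), ← lintegral_indicator measurableSet_Ioc]
    rfl
  · have h0 (t : ℝ) : triangle.indicator f (t, r) = 0 :=
      indicator_of_notMem (fun h => hr (h.1.trans_le h.2)) _
    simp only [h0, lintegral_zero, indicator_of_notMem (show r ∉ Ioi 0 from hr)]

lemma setLIntegral_triangle_eq_Ioi_Ici {f : ℝ × ℝ → ℝ≥0∞} (hf : Measurable f) :
    ∫⁻ z in triangle, f z = ∫⁻ t in Ioi 0, ∫⁻ r in Ici t, f (t, r) := by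
  rw [← lintegral_indicator measurableSet_triangle, Measure.volume_eq_prod,
    lintegral_prod _ (hf.indicator measurableSet_triangle).aemeasurable,
    ← lintegral_indicator measurableSet_Ioi]
  congr 1 with t
  by_cases ht : 0 < t
  · rw [indicator_of_mem (show t ∈ Ioi 0 from ht), ← lintegral_indicator measurableSet_Ici]
    congr 1 with r
    by_cases htr : t ≤ r
    · rw [indicator_of_mem (show (t, r) ∈ triangle from ⟨ht, htr⟩),
        indicator_of_mem (show r ∈ Ici t from htr)]
    · rw [indicator_of_notMem (show (t, r) ∉ triangle from fun h => htr h.2),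
        indicator_of_notMem (show r ∉ Ici t from htr)]
  · have h0 (r : ℝ) : triangle.indicator f (t, r) = 0 :=
      indicator_of_notMem (fun h => ht h.1) _
    simp only [h0, lintegral_zero, indicator_of_notMem (show t ∉ Ioi 0 from ht)]

lemma map_snd_restrict_triangle :
    (volume.restrict triangle).map Prod.snd =
      (volume.restrict (Ioi 0)).withDensity ENNReal.ofReal := by
  refine Measure.ext_of_lintegral _ fun g hg => ?_
  rw [lintegral_map hg measurable_snd,
    setLIntegral_triangle_eq_Ioi_Ioc (f := fun z => g z.2) (by fun_prop),
    lintegral_withDensity_eq_lintegral_mul _ (by fun_prop) hg]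
  refine setLIntegral_congr_fun measurableSet_Ioi fun r _ => ?_
  rw [setLIntegral_const (Ioc 0 r) (g r), Real.volume_Ioc, sub_zero, mul_comm]
  rfl

lemma map_fst_restrict_triangle_absolutelyContinuous_rmeas :
    (volume.restrict triangle).map Prod.fst ≪ rmeas := by
  have hvol : (volume.restrict triangle).map Prod.fst ≪ volume.restrict (Ioi 0) := by
    refine Measure.AbsolutelyContinuous.mk fun s hs hs0 => ?_
    rw [Measure.restrict_apply hs] at hs0
    rw [Measure.map_apply measurable_fst hs, Measure.restrict_apply (measurable_fst hs)]
    refine measure_mono_null (t := (s ∩ Ioi 0) ×ˢ univ) (fun z hz => ⟨⟨hz.1, hz.2.1⟩, trivial⟩) ?_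
    rw [Measure.volume_eq_prod, Measure.prod_prod, hs0, zero_mul]
  refine hvol.trans (withDensity_absolutelyContinuous' (by fun_prop) ?_)
  filter_upwards [ae_restrict_mem measurableSet_Ioi] with r (hr : 0 < r)
  exact ENNReal.ofReal_ne_zero_iff.mpr (by positivity)

section

variable {E : Type*} [NormedAddCommGroup E]

lemma eLpNorm_comp_snd_restrict_triangle_le {G : ℝ → E} (hG : StronglyMeasurable G) (q : ℝ≥0∞) :
    eLpNorm (fun z : ℝ × ℝ => G z.2) q (volume.restrict triangle) ≤ eLpNorm G q rmeas := by
  rw [← Function.comp_def, ← eLpNorm_map_measure hG.aestronglyMeasurable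
    measurable_snd.aemeasurable, map_snd_restrict_triangle]
  exact eLpNorm_mono_measure _ withDensity_ofReal_le_rmeas

variable [NormedSpace ℝ E]

lemma eLpNorm_smul_comp_fst_restrict_triangle {p : ℝ≥0∞} (hp : 1 < p) (hp_top : p ≠ ∞)
    {F : ℝ → E} (hF : StronglyMeasurable F) :
    eLpNorm (fun z : ℝ × ℝ => (z.1 / z.2) • F z.1) p (volume.restrict triangle) =
      eLpNorm F p (ENNReal.ofReal (p.toReal - 1)⁻¹ •
        (volume.restrict (Ioi 0)).withDensity ENNReal.ofReal) := by
  have hp0 : p ≠ 0 := (zero_lt_one.trans hp).ne'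
  have hp1 : 1 < p.toReal := by
    simpa using (ENNReal.toReal_lt_toReal ENNReal.one_ne_top hp_top).mpr hp
  rw [eLpNorm_eq_lintegral_rpow_enorm_toReal hp0 hp_top,
    eLpNorm_eq_lintegral_rpow_enorm_toReal hp0 hp_top, lintegral_smul_measure,
    lintegral_withDensity_eq_lintegral_mul _ (by fun_prop) (by fun_prop),
    setLIntegral_triangle_eq_Ioi_Ici (by fun_prop)]
  congr 1
  rw [smul_eq_mul, ← lintegral_const_mul' _ _ (by simp)]
  refine setLIntegral_congr_fun measurableSet_Ioi fun t (ht : 0 < t) => ?_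
  have hpt : ∀ r ∈ Ici t, ‖((t, r).1 / (t, r).2) • F (t, r).1‖ₑ ^ p.toReal =
      ENNReal.ofReal ((t / r) ^ p.toReal) * ‖F t‖ₑ ^ p.toReal := fun r (hr : t ≤ r) => by
    rw [enorm_smul, ENNReal.mul_rpow_of_nonneg _ _ (by positivity),
      Real.enorm_of_nonneg (div_nonneg ht.le (ht.le.trans hr)),
      ENNReal.ofReal_rpow_of_nonneg (div_nonneg ht.le (ht.le.trans hr)) (by positivity)]
  rw [setLIntegral_congr_fun measurableSet_Ici hpt, lintegral_mul_const' _ _ (by simp),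
    lintegral_Ici_div_rpow hp1 ht, div_eq_inv_mul,
    ENNReal.ofReal_mul (inv_pos.mpr (sub_pos.mpr hp1)).le]
  simp only [Pi.mul_apply]
  ring

lemma eLpNorm_smul_comp_fst_restrict_triangle_top_le {F : ℝ → E} (hF : StronglyMeasurable F) :
    eLpNorm (fun z : ℝ × ℝ => (z.1 / z.2) • F z.1) ∞ (volume.restrict triangle) ≤
      eLpNorm F ∞ rmeas := by
  calc _ ≤ eLpNorm (F ∘ Prod.fst) ∞ (volume.restrict triangle) := by
        refine eLpNorm_mono_enorm_ae ?_
        filter_upwards [ae_restrict_mem measurableSet_triangle] with z hz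
        rw [enorm_smul, Function.comp_apply]
        refine mul_le_of_le_one_left' ?_
        rw [Real.enorm_of_nonneg (div_nonneg hz.1.le (hz.1.le.trans hz.2))]
        exact ENNReal.ofReal_le_one.mpr (div_le_one_of_le₀ hz.2 (hz.1.le.trans hz.2))
    _ = eLpNorm F ∞ ((volume.restrict triangle).map Prod.fst) :=
        (eLpNorm_map_measure hF.aestronglyMeasurable measurable_fst.aemeasurable).symm
    _ ≤ eLpNorm F ∞ rmeas := by
        simp only [eLpNorm_exponent_top]
        exact eLpNormEssSup_mono_measure _ map_fst_restrict_triangle_absolutelyContinuous_rmeas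

lemma exists_eLpNorm_smul_comp_fst_restrict_triangle_le {p : ℝ≥0∞} (hp : 1 < p) :
    ∃ C : ℝ, 0 < C ∧ ∀ F : ℝ → E, StronglyMeasurable F →
      eLpNorm (fun z : ℝ × ℝ => (z.1 / z.2) • F z.1) p (volume.restrict triangle) ≤
        ENNReal.ofReal C * eLpNorm F p rmeas := by
  rcases eq_or_ne p ∞ with rfl | hp_top
  · exact ⟨1, one_pos, fun F hF => by
      simpa using eLpNorm_smul_comp_fst_restrict_triangle_top_le hF⟩
  have hp1 : 0 < p.toReal - 1 := by
    simpa using (ENNReal.toReal_lt_toReal ENNReal.one_ne_top hp_top).mpr hp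
  refine ⟨(p.toReal - 1)⁻¹ ^ (1 / p).toReal, by positivity, fun F hF => ?_⟩
  rw [eLpNorm_smul_comp_fst_restrict_triangle hp hp_top hF,
    eLpNorm_smul_measure_of_ne_top hp_top, smul_eq_mul,
    ENNReal.ofReal_rpow_of_nonneg (by positivity) ENNReal.toReal_nonneg]
  gcongr
  exact withDensity_ofReal_le_rmeas

end

lemma enorm_Re2_le (ψ₁ ψ₂ : ℝ → ℂ) (r : ℝ) : ‖Re2 ψ₁ ψ₂ r‖ₑ ≤ ‖ψ₁ r * ψ₂ r‖ₑ := by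
  refine enorm_le_iff_norm_le.mpr ((Complex.abs_re_le_norm _).trans_eq ?_)
  simp

lemma enorm_Atheta2_le (ψ₁ ψ₂ : ℝ → ℂ) {r : ℝ} (hr : 0 ≤ r) :
    ‖Atheta2 ψ₁ ψ₂ r‖ₑ ≤ 2⁻¹ * ∫⁻ t in Ioc 0 r, ‖ψ₁ t * ψ₂ t‖ₑ * ‖t‖ₑ := by
  rw [Atheta2, enorm_mul, intervalIntegral.integral_of_le hr]
  have hhalf : ‖(-(1 / 2) : ℝ)‖ₑ = 2⁻¹ := by
    rw [enorm_neg, Real.enorm_of_nonneg (by norm_num), one_div, ENNReal.ofReal_inv_of_pos two_pos,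
      ENNReal.ofReal_ofNat]
  rw [hhalf]
  gcongr
  refine (enorm_integral_le_lintegral_enorm _).trans (lintegral_mono fun t => ?_)
  rw [enorm_mul]
  gcongr
  exact enorm_Re2_le ψ₁ ψ₂ t

lemma ofReal_abs_M40_le (ψ₁ ψ₂ ψ₃ ψ₄ : ℝ → ℂ) :
    ENNReal.ofReal |M40 ψ₁ ψ₂ ψ₃ ψ₄| ≤ ∫⁻ r, ‖ψ₁ r * ψ₂ r‖ₑ * ‖ψ₃ r * ψ₄ r‖ₑ ∂rmeas := by
  calc ENNReal.ofReal |M40 ψ₁ ψ₂ ψ₃ ψ₄|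
      ≤ ENNReal.ofReal |2 * π * ∫ r in Ioi 0, Re2 ψ₁ ψ₂ r * Re2 ψ₃ ψ₄ r * r| := by
        rw [M40, abs_mul]
        exact ENNReal.ofReal_le_ofReal (mul_le_of_le_one_left (abs_nonneg _) (by norm_num))
    _ ≤ ∫⁻ r, ‖Re2 ψ₁ ψ₂ r * Re2 ψ₃ ψ₄ r‖ₑ ∂rmeas := ofReal_abs_two_pi_mul_setIntegral_le _
    _ ≤ _ := by
        gcongr with r
        rw [enorm_mul]
        exact mul_le_mul' (enorm_Re2_le _ _ r) (enorm_Re2_le _ _ r)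

lemma ofReal_mul_enorm_M41_integrand_le (ψ₁ ψ₂ ψ₃ ψ₄ : ℝ → ℂ) {r : ℝ} (hr : 0 < r) :
    ENNReal.ofReal (2 * π * r) * ‖(r ^ 2)⁻¹ * Atheta2 ψ₁ ψ₂ r * Re2 ψ₃ ψ₄ r‖ₑ ≤
      ENNReal.ofReal π *
        ∫⁻ t in Ioc 0 r, ‖(t / r) • (ψ₁ t * ψ₂ t)‖ₑ * ‖ψ₃ r * ψ₄ r‖ₑ := by
  set I := ∫⁻ t in Ioc 0 r, ‖ψ₁ t * ψ₂ t‖ₑ * ‖t‖ₑ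
  have hI : ∫⁻ t in Ioc 0 r, ‖(t / r) • (ψ₁ t * ψ₂ t)‖ₑ * ‖ψ₃ r * ψ₄ r‖ₑ =
      ENNReal.ofReal r⁻¹ * I * ‖ψ₃ r * ψ₄ r‖ₑ := by
    rw [lintegral_mul_const' _ _ enorm_ne_top, ← lintegral_const_mul' _ _ ENNReal.ofReal_ne_top]
    congr 1
    refine setLIntegral_congr_fun measurableSet_Ioc fun t (ht : 0 < t ∧ t ≤ r) => ?_
    rw [enorm_smul, div_eq_mul_inv, enorm_mul, Real.enorm_of_nonneg (inv_nonneg.mpr hr.le)]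
    ring
  have hconst : ENNReal.ofReal (2 * π * r) * ENNReal.ofReal (r ^ 2)⁻¹ * 2⁻¹ =
      ENNReal.ofReal π * ENNReal.ofReal r⁻¹ := by
    rw [← ENNReal.ofReal_ofNat 2, ← ENNReal.ofReal_inv_of_pos two_pos,
      ← ENNReal.ofReal_mul (by positivity), ← ENNReal.ofReal_mul (by positivity),
      ← ENNReal.ofReal_mul pi_pos.le]
    congr 1
    field_simp
  calc ENNReal.ofReal (2 * π * r) * ‖(r ^ 2)⁻¹ * Atheta2 ψ₁ ψ₂ r * Re2 ψ₃ ψ₄ r‖ₑ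
      ≤ ENNReal.ofReal (2 * π * r) * (ENNReal.ofReal (r ^ 2)⁻¹ * (2⁻¹ * I) *
          ‖ψ₃ r * ψ₄ r‖ₑ) := by
        rw [enorm_mul, enorm_mul, Real.enorm_of_nonneg (by positivity)]
        gcongr
        · exact enorm_Atheta2_le ψ₁ ψ₂ hr.le
        · exact enorm_Re2_le ψ₃ ψ₄ r
    _ = ENNReal.ofReal (2 * π * r) * ENNReal.ofReal (r ^ 2)⁻¹ * 2⁻¹ * I * ‖ψ₃ r * ψ₄ r‖ₑ := by
        ring
    _ = _ := by
        rw [hI, hconst]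
        ring

lemma ofReal_abs_M41_le_setLIntegral_triangle {ψ₁ ψ₂ ψ₃ ψ₄ : ℝ → ℂ} (h₁ : Measurable ψ₁)
    (h₂ : Measurable ψ₂) (h₃ : Measurable ψ₃) (h₄ : Measurable ψ₄) :
    ENNReal.ofReal |M41 ψ₁ ψ₂ ψ₃ ψ₄| ≤ ENNReal.ofReal π *
      ∫⁻ z in triangle, ‖(z.1 / z.2) • (ψ₁ z.1 * ψ₂ z.1)‖ₑ * ‖ψ₃ z.2 * ψ₄ z.2‖ₑ := by
  rw [setLIntegral_triangle_eq_Ioi_Ioc (by fun_prop),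
    ← lintegral_const_mul' _ _ ENNReal.ofReal_ne_top]
  calc ENNReal.ofReal |M41 ψ₁ ψ₂ ψ₃ ψ₄|
      ≤ ∫⁻ r, ‖(r ^ 2)⁻¹ * Atheta2 ψ₁ ψ₂ r * Re2 ψ₃ ψ₄ r‖ₑ ∂rmeas :=
        ofReal_abs_two_pi_mul_setIntegral_le _
    _ ≤ _ := by
        rw [lintegral_rmeas]
        exact setLIntegral_mono' measurableSet_Ioi fun r hr =>
          ofReal_mul_enorm_M41_integrand_le ψ₁ ψ₂ ψ₃ ψ₄ hr

lemma exists_ofReal_abs_M41_le {p q : ℝ≥0∞} [p.HolderConjugate q] (hp : 1 < p) :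
    ∃ C : ℝ, 0 < C ∧ ∀ ψ₁ ψ₂ ψ₃ ψ₄ : ℝ → ℂ,
      Measurable ψ₁ → Measurable ψ₂ → Measurable ψ₃ → Measurable ψ₄ →
      ENNReal.ofReal |M41 ψ₁ ψ₂ ψ₃ ψ₄| ≤
        ENNReal.ofReal C * eLpNorm (fun r => ψ₁ r * ψ₂ r) p rmeas *
          eLpNorm (fun r => ψ₃ r * ψ₄ r) q rmeas := by
  obtain ⟨C, hC, hfst⟩ := exists_eLpNorm_smul_comp_fst_restrict_triangle_le (E := ℂ) hp
  refine ⟨π * C, by positivity, fun ψ₁ ψ₂ ψ₃ ψ₄ h₁ h₂ h₃ h₄ => ?_⟩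
  have hF : StronglyMeasurable fun r => ψ₁ r * ψ₂ r := (h₁.mul h₂).stronglyMeasurable
  have hG : StronglyMeasurable fun r => ψ₃ r * ψ₄ r := (h₃.mul h₄).stronglyMeasurable
  calc ENNReal.ofReal |M41 ψ₁ ψ₂ ψ₃ ψ₄|
      ≤ ENNReal.ofReal π *
          ∫⁻ z in triangle, ‖(z.1 / z.2) • (ψ₁ z.1 * ψ₂ z.1)‖ₑ * ‖ψ₃ z.2 * ψ₄ z.2‖ₑ :=
        ofReal_abs_M41_le_setLIntegral_triangle h₁ h₂ h₃ h₄
    _ ≤ ENNReal.ofReal π *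
          (eLpNorm (fun z : ℝ × ℝ => (z.1 / z.2) • (ψ₁ z.1 * ψ₂ z.1)) p (volume.restrict triangle) *
            eLpNorm (fun z : ℝ × ℝ => ψ₃ z.2 * ψ₄ z.2) q (volume.restrict triangle)) := by
        gcongr
        exact lintegral_enorm_mul_le_eLpNorm_mul_eLpNorm (by fun_prop) (by fun_prop)
    _ ≤ ENNReal.ofReal π * (ENNReal.ofReal C * eLpNorm (fun r => ψ₁ r * ψ₂ r) p rmeas *
          eLpNorm (fun r => ψ₃ r * ψ₄ r) q rmeas) := by
        gcongr
        · exact hfst (fun r => ψ₁ r * ψ₂ r) hF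
        · exact eLpNorm_comp_snd_restrict_triangle_le (G := fun r => ψ₃ r * ψ₄ r) hG q
    _ = _ := by
        rw [ENNReal.ofReal_mul pi_pos.le]
        ring

theorem duality_estimates_M4_general (p q : ℝ≥0∞)
    (hpq : 1 / p + 1 / q = 1) :
    (¬(p = 1 ∧ q = ∞) →
      ∃ C : ℝ, 0 < C ∧ ∀ ψ₁ ψ₂ ψ₃ ψ₄ : ℝ → ℂ,
        Measurable ψ₁ → Measurable ψ₂ → Measurable ψ₃ → Measurable ψ₄ →
        ENNReal.ofReal |M41 ψ₁ ψ₂ ψ₃ ψ₄| ≤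
          ENNReal.ofReal C * eLpNorm (fun r => ψ₁ r * ψ₂ r) p rmeas *
            eLpNorm (fun r => ψ₃ r * ψ₄ r) q rmeas) ∧
    (∀ ψ₁ ψ₂ ψ₃ ψ₄ : ℝ → ℂ,
        Measurable ψ₁ → Measurable ψ₂ → Measurable ψ₃ → Measurable ψ₄ →
        ENNReal.ofReal |M40 ψ₁ ψ₂ ψ₃ ψ₄| ≤
          eLpNorm (fun r => ψ₁ r * ψ₂ r) p rmeas *
            eLpNorm (fun r => ψ₃ r * ψ₄ r) q rmeas) := by
  have hconj : p.HolderConjugate q := ENNReal.holderConjugate_of_one_div_add_one_div hpq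
  refine ⟨fun hp_ne => ?_, fun ψ₁ ψ₂ ψ₃ ψ₄ h₁ h₂ h₃ h₄ => ?_⟩
  · refine exists_ofReal_abs_M41_le ((ENNReal.HolderConjugate.one_le p q).lt_of_ne ?_)
    exact fun h => hp_ne ⟨h.symm, (ENNReal.HolderConjugate.eq_top_iff_eq_one q p).mpr h.symm⟩
  · exact (ofReal_abs_M40_le ψ₁ ψ₂ ψ₃ ψ₄).trans
      (lintegral_enorm_mul_le_eLpNorm_mul_eLpNorm (by fun_prop) (by fun_prop))

/-- Duality estimates (Hölder-type) for `M_{4,1}` and `M_{4,0}`. -/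
theorem duality_estimates_M4 (p q : ℝ≥0∞) (hp : 1 ≤ p) (hq : 1 ≤ q)
    (hpq : 1 / p + 1 / q = 1) :
    (¬(p = 1 ∧ q = ∞) →
      ∃ C : ℝ, 0 < C ∧ ∀ ψ₁ ψ₂ ψ₃ ψ₄ : ℝ → ℂ,
        Measurable ψ₁ → Measurable ψ₂ → Measurable ψ₃ → Measurable ψ₄ →
        ENNReal.ofReal |M41 ψ₁ ψ₂ ψ₃ ψ₄| ≤
          ENNReal.ofReal C * eLpNorm (fun r => ψ₁ r * ψ₂ r) p rmeas *
            eLpNorm (fun r => ψ₃ r * ψ₄ r) q rmeas) ∧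
    (∀ ψ₁ ψ₂ ψ₃ ψ₄ : ℝ → ℂ,
        Measurable ψ₁ → Measurable ψ₂ → Measurable ψ₃ → Measurable ψ₄ →
        ENNReal.ofReal |M40 ψ₁ ψ₂ ψ₃ ψ₄| ≤
          eLpNorm (fun r => ψ₁ r * ψ₂ r) p rmeas *
            eLpNorm (fun r => ψ₃ r * ψ₄ r) q rmeas) :=
  duality_estimates_M4_general p q hpq
end

section
/- Let k ∈ {1,2} and let w₁, …, w₅ : (0,∞) → (0,∞) be decreasing functions with w₁(r)w₂(r)w₃(r)w₄(r)w₅(r) = r^{-2} for all r > 0. Then there is an absolute constant C > 0 such that for all measurable ψ₁, …, ψ₅ : (0,∞) → ℂ, ‖N_{5,k}(ψ₁,…,ψ₅)‖_{L²} ≤ C ∏_{j=1}^{5} ‖w_j ψ_j‖_{L²}. -/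
/-!
For `t ≤ r` the decreasing weights satisfy `w₁(r) w₂(r) ≤ w₁(t) w₂(t)`, so Cauchy–Schwarz in
`L²(2πr dr)` gives the pointwise bound `w₁(r) w₂(r) |A_θ[ψ₁,ψ₂](r)| ≤ (4π)⁻¹ ‖w₁ψ₁‖ ‖w₂ψ₂‖`.
Writing `r⁻² = w₁ ⋯ w₅(r)` turns `|N_{5,1}(r)|` into a product of two such factors and
`w₅(r) |ψ₅(r)|`. For `N_{5,2}`, write `1/t = w₁ ⋯ w₅(t) · t` under the integral, use the same bound
for `A_θ`, `w₅(t) ≤ w₅(r)`, and Cauchy–Schwarz once more for `∫ w₃|ψ₃| w₄|ψ₄| t dt`. In both cases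
`|N_{5,k}(r)| ≤ C ∏_{j ≤ 4} ‖w_jψ_j‖ · w₅(r) |ψ₅(r)|`, and taking the `L²` norm in `r` gives the
estimate with `C = 1/(8π²)`. All bounds are stated in `ℝ≥0∞`, so infinite norms need no separate
case.
-/

open MeasureTheory Set
open scoped ENNReal

/-- The quintic nonlinearities `N_{5,1}`, `N_{5,2}`. -/
noncomputable def N5 (k : ℕ) (ψ₁ ψ₂ ψ₃ ψ₄ ψ₅ : ℝ → ℂ) (r : ℝ) : ℂ :=
  match k with
  | 1 => ((Atheta2 ψ₁ ψ₂ r * Atheta2 ψ₃ ψ₄ r / r ^ 2 : ℝ) : ℂ) * ψ₅ r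
  | _ => -(((∫ t in Set.Ioi r, Atheta2 ψ₁ ψ₂ t * Re2 ψ₃ ψ₄ t / t) : ℝ) : ℂ) * ψ₅ r

lemma Complex.enorm_ofReal (x : ℝ) : ‖(x : ℂ)‖ₑ = ‖x‖ₑ := by
  rw [← ofReal_norm, ← ofReal_norm, Complex.norm_real]

namespace QuinticEstimate

lemma rmeas_absolutelyContinuous : rmeas ≪ volume.restrict (Ioi 0) :=
  withDensity_absolutelyContinuous _ _

lemma ae_rmeas_pos : ∀ᵐ r ∂rmeas, 0 < r :=
  rmeas_absolutelyContinuous.ae_le (ae_restrict_mem measurableSet_Ioi)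

lemma setLIntegral_Ioi_mul_ofReal_eq_lintegral_rmeas (F : ℝ → ℝ≥0∞) :
    ∫⁻ t in Ioi 0, F t * ENNReal.ofReal t = ENNReal.ofReal (2 * Real.pi)⁻¹ * ∫⁻ t, F t ∂rmeas := by
  have hdens : Measurable fun r : ℝ => ENNReal.ofReal (2 * Real.pi * r) := by fun_prop
  rw [rmeas, lintegral_withDensity_eq_lintegral_mul_non_measurable _ hdens
    (ae_of_all _ fun _ => ENNReal.ofReal_lt_top), ← lintegral_const_mul' _ _ ENNReal.ofReal_ne_top]
  refine setLIntegral_congr_fun measurableSet_Ioi fun t ht => ?_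
  rw [Pi.mul_apply, ← mul_assoc, ← ENNReal.ofReal_mul (by positivity),
    inv_mul_cancel_left₀ (by positivity), mul_comm]

lemma setLIntegral_enorm_mul_le {f g : ℝ → ℂ} (hf : AEMeasurable f (volume.restrict (Ioi 0)))
    (hg : AEMeasurable g (volume.restrict (Ioi 0))) :
    ∫⁻ t in Ioi 0, ‖f t‖ₑ * ‖g t‖ₑ * ENNReal.ofReal t
      ≤ ENNReal.ofReal (2 * Real.pi)⁻¹ * (eLpNorm f 2 rmeas * eLpNorm g 2 rmeas) := by
  rw [setLIntegral_Ioi_mul_ofReal_eq_lintegral_rmeas]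
  gcongr
  have := eLpNorm_le_eLpNorm_mul_eLpNorm'_of_norm (p := 2) (q := 2) (r := 1)
    (hf.mono_ac rmeas_absolutelyContinuous).aestronglyMeasurable
    (hg.mono_ac rmeas_absolutelyContinuous).aestronglyMeasurable
    (· * ·) 1 (by filter_upwards with x; simp)
  simpa [eLpNorm_one_eq_lintegral_enorm] using this

lemma enorm_Re2_le (ψ₁ ψ₂ : ℝ → ℂ) (t : ℝ) : ‖Re2 ψ₁ ψ₂ t‖ₑ ≤ ‖ψ₁ t‖ₑ * ‖ψ₂ t‖ₑ := by
  calc ‖Re2 ψ₁ ψ₂ t‖ₑ ≤ ‖(starRingEnd ℂ) (ψ₁ t) * ψ₂ t‖ₑ := by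
        rw [Re2, ← ofReal_norm, ← ofReal_norm]
        exact ENNReal.ofReal_le_ofReal (Complex.abs_re_le_norm _)
    _ = ‖ψ₁ t‖ₑ * ‖ψ₂ t‖ₑ := by rw [enorm_mul, ← ofReal_norm, Complex.norm_conj, ofReal_norm]

lemma enorm_Atheta2_le (ψ₁ ψ₂ : ℝ → ℂ) {r : ℝ} (hr : 0 ≤ r) :
    ‖Atheta2 ψ₁ ψ₂ r‖ₑ
      ≤ ENNReal.ofReal 2⁻¹ * ∫⁻ t in Ioc 0 r, ‖ψ₁ t‖ₑ * ‖ψ₂ t‖ₑ * ENNReal.ofReal t := by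
  rw [Atheta2, intervalIntegral.integral_of_le hr, enorm_mul,
    show ‖-(1 / 2 : ℝ)‖ₑ = ENNReal.ofReal 2⁻¹ by rw [enorm_neg, Real.enorm_of_nonneg] <;> norm_num]
  gcongr
  refine (enorm_integral_le_lintegral_enorm _).trans (setLIntegral_mono' measurableSet_Ioc ?_)
  intro t ht
  rw [enorm_mul, Real.enorm_of_nonneg ht.1.le]
  gcongr
  exact enorm_Re2_le ψ₁ ψ₂ t

structure IsDecreasingWeight (w : ℝ → ℝ) : Prop where
  pos : ∀ r, 0 < r → 0 < w r
  antitoneOn : AntitoneOn w (Ioi 0)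

lemma IsDecreasingWeight.enorm_le {w : ℝ → ℝ} (hw : IsDecreasingWeight w) {r s : ℝ}
    (hr : 0 < r) (hrs : r ≤ s) : ‖w s‖ₑ ≤ ‖w r‖ₑ := by
  rw [Real.enorm_of_nonneg (hw.pos s (hr.trans_le hrs)).le, Real.enorm_of_nonneg (hw.pos r hr).le]
  exact ENNReal.ofReal_le_ofReal (hw.antitoneOn hr (hr.trans_le hrs) hrs)

lemma IsDecreasingWeight.aemeasurable_mul {w : ℝ → ℝ} (hw : IsDecreasingWeight w) {ψ : ℝ → ℂ}
    (hψ : Measurable ψ) : AEMeasurable (fun t => (w t : ℂ) * ψ t) (volume.restrict (Ioi 0)) :=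
  (Complex.measurable_ofReal.comp_aemeasurable
    (aemeasurable_restrict_of_antitoneOn measurableSet_Ioi hw.antitoneOn)).mul hψ.aemeasurable

noncomputable def weightedL2Norm (w : ℝ → ℝ) (ψ : ℝ → ℂ) : ℝ≥0∞ :=
  eLpNorm (fun r => ((w r : ℝ) : ℂ) * ψ r) 2 rmeas

lemma enorm_weight_mul_Atheta2_le {w₁ w₂ : ℝ → ℝ} {ψ₁ ψ₂ : ℝ → ℂ} (hw₁ : IsDecreasingWeight w₁)
    (hw₂ : IsDecreasingWeight w₂)
    (hf₁ : AEMeasurable (fun t => (w₁ t : ℂ) * ψ₁ t) (volume.restrict (Ioi 0)))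
    (hf₂ : AEMeasurable (fun t => (w₂ t : ℂ) * ψ₂ t) (volume.restrict (Ioi 0)))
    {r : ℝ} (hr : 0 < r) :
    ‖w₁ r‖ₑ * ‖w₂ r‖ₑ * ‖Atheta2 ψ₁ ψ₂ r‖ₑ
      ≤ ENNReal.ofReal (4 * Real.pi)⁻¹ * (weightedL2Norm w₁ ψ₁ * weightedL2Norm w₂ ψ₂) := by
  calc ‖w₁ r‖ₑ * ‖w₂ r‖ₑ * ‖Atheta2 ψ₁ ψ₂ r‖ₑ
      ≤ ‖w₁ r‖ₑ * ‖w₂ r‖ₑ *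
          (ENNReal.ofReal 2⁻¹ * ∫⁻ t in Ioc 0 r, ‖ψ₁ t‖ₑ * ‖ψ₂ t‖ₑ * ENNReal.ofReal t) := by
        gcongr; exact enorm_Atheta2_le ψ₁ ψ₂ hr.le
    _ = ENNReal.ofReal 2⁻¹ *
          ∫⁻ t in Ioc 0 r, ‖w₁ r‖ₑ * ‖w₂ r‖ₑ * (‖ψ₁ t‖ₑ * ‖ψ₂ t‖ₑ * ENNReal.ofReal t) := by
        rw [lintegral_const_mul' _ _ (by finiteness)]; ring
    _ ≤ ENNReal.ofReal 2⁻¹ * ∫⁻ t in Ioc 0 r,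
          ‖(w₁ t : ℂ) * ψ₁ t‖ₑ * ‖(w₂ t : ℂ) * ψ₂ t‖ₑ * ENNReal.ofReal t := by
        gcongr ENNReal.ofReal 2⁻¹ * ?_
        refine setLIntegral_mono' measurableSet_Ioc fun t ht => ?_
        have h₁ := hw₁.enorm_le ht.1 ht.2
        have h₂ := hw₂.enorm_le ht.1 ht.2
        rw [enorm_mul, enorm_mul, Complex.enorm_ofReal, Complex.enorm_ofReal]
        calc ‖w₁ r‖ₑ * ‖w₂ r‖ₑ * (‖ψ₁ t‖ₑ * ‖ψ₂ t‖ₑ * ENNReal.ofReal t)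
            ≤ ‖w₁ t‖ₑ * ‖w₂ t‖ₑ * (‖ψ₁ t‖ₑ * ‖ψ₂ t‖ₑ * ENNReal.ofReal t) := by gcongr
          _ = _ := by ring
    _ ≤ ENNReal.ofReal 2⁻¹ * ∫⁻ t in Ioi 0,
          ‖(w₁ t : ℂ) * ψ₁ t‖ₑ * ‖(w₂ t : ℂ) * ψ₂ t‖ₑ * ENNReal.ofReal t := by
        gcongr; exact Ioc_subset_Ioi_self
    _ ≤ ENNReal.ofReal 2⁻¹ *
          (ENNReal.ofReal (2 * Real.pi)⁻¹ * (weightedL2Norm w₁ ψ₁ * weightedL2Norm w₂ ψ₂)) := by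
        gcongr; exact setLIntegral_enorm_mul_le hf₁ hf₂
    _ = ENNReal.ofReal (4 * Real.pi)⁻¹ * (weightedL2Norm w₁ ψ₁ * weightedL2Norm w₂ ψ₂) := by
        rw [← mul_assoc, ← ENNReal.ofReal_mul (by norm_num), ← mul_inv]; ring_nf

section Quintic

variable {w₁ w₂ w₃ w₄ w₅ : ℝ → ℝ} {ψ₁ ψ₂ ψ₃ ψ₄ ψ₅ : ℝ → ℂ}

lemma enorm_integrand_N5_two_le
    (hprod : ∀ r, 0 < r → w₁ r * w₂ r * w₃ r * w₄ r * w₅ r = (r ^ 2)⁻¹) {t : ℝ} (ht : 0 < t) :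
    ‖Atheta2 ψ₁ ψ₂ t * Re2 ψ₃ ψ₄ t / t‖ₑ
      ≤ ‖w₁ t‖ₑ * ‖w₂ t‖ₑ * ‖Atheta2 ψ₁ ψ₂ t‖ₑ * ‖w₅ t‖ₑ
        * (‖(w₃ t : ℂ) * ψ₃ t‖ₑ * ‖(w₄ t : ℂ) * ψ₄ t‖ₑ * ENNReal.ofReal t) := by
  have ht_inv : t⁻¹ = w₁ t * w₂ t * w₃ t * w₄ t * w₅ t * t := by
    rw [hprod t ht]; field_simp
  calc ‖Atheta2 ψ₁ ψ₂ t * Re2 ψ₃ ψ₄ t / t‖ₑ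
      = ‖Atheta2 ψ₁ ψ₂ t‖ₑ * ‖Re2 ψ₃ ψ₄ t‖ₑ
          * (‖w₁ t‖ₑ * ‖w₂ t‖ₑ * ‖w₃ t‖ₑ * ‖w₄ t‖ₑ * ‖w₅ t‖ₑ * ENNReal.ofReal t) := by
        rw [div_eq_mul_inv, ht_inv]; simp only [enorm_mul]; rw [Real.enorm_of_nonneg ht.le]
    _ ≤ ‖Atheta2 ψ₁ ψ₂ t‖ₑ * (‖ψ₃ t‖ₑ * ‖ψ₄ t‖ₑ)
          * (‖w₁ t‖ₑ * ‖w₂ t‖ₑ * ‖w₃ t‖ₑ * ‖w₄ t‖ₑ * ‖w₅ t‖ₑ * ENNReal.ofReal t) := by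
        gcongr; exact enorm_Re2_le ψ₃ ψ₄ t
    _ = _ := by simp only [enorm_mul, Complex.enorm_ofReal]; ring

lemma enorm_integral_N5_two_le (hw₁ : IsDecreasingWeight w₁) (hw₂ : IsDecreasingWeight w₂)
    (hw₅ : IsDecreasingWeight w₅)
    (hprod : ∀ r, 0 < r → w₁ r * w₂ r * w₃ r * w₄ r * w₅ r = (r ^ 2)⁻¹)
    (hf₁ : AEMeasurable (fun t => (w₁ t : ℂ) * ψ₁ t) (volume.restrict (Ioi 0)))
    (hf₂ : AEMeasurable (fun t => (w₂ t : ℂ) * ψ₂ t) (volume.restrict (Ioi 0)))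
    (hf₃ : AEMeasurable (fun t => (w₃ t : ℂ) * ψ₃ t) (volume.restrict (Ioi 0)))
    (hf₄ : AEMeasurable (fun t => (w₄ t : ℂ) * ψ₄ t) (volume.restrict (Ioi 0)))
    {r : ℝ} (hr : 0 < r) :
    ‖∫ t in Ioi r, Atheta2 ψ₁ ψ₂ t * Re2 ψ₃ ψ₄ t / t‖ₑ
      ≤ ENNReal.ofReal (4 * Real.pi)⁻¹ * (weightedL2Norm w₁ ψ₁ * weightedL2Norm w₂ ψ₂)
        * (ENNReal.ofReal (2 * Real.pi)⁻¹ * (weightedL2Norm w₃ ψ₃ * weightedL2Norm w₄ ψ₄))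
        * ‖w₅ r‖ₑ := by
  set c := ENNReal.ofReal (4 * Real.pi)⁻¹ * (weightedL2Norm w₁ ψ₁ * weightedL2Norm w₂ ψ₂)
  set F := fun t => ‖(w₃ t : ℂ) * ψ₃ t‖ₑ * ‖(w₄ t : ℂ) * ψ₄ t‖ₑ * ENNReal.ofReal t
  have hF : AEMeasurable F (volume.restrict (Ioi r)) :=
    ((hf₃.enorm.mul hf₄.enorm).mul measurable_id.ennreal_ofReal.aemeasurable).mono_measure
      (Measure.restrict_mono (Ioi_subset_Ioi hr.le) le_rfl)
  have hpt : ∀ t ∈ Ioi r, ‖Atheta2 ψ₁ ψ₂ t * Re2 ψ₃ ψ₄ t / t‖ₑ ≤ c * ‖w₅ r‖ₑ * F t := by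
    intro t ht
    have ht₀ : 0 < t := hr.trans ht
    refine (enorm_integrand_N5_two_le hprod ht₀).trans ?_
    gcongr
    · exact enorm_weight_mul_Atheta2_le hw₁ hw₂ hf₁ hf₂ ht₀
    · exact hw₅.enorm_le hr ht.le
  calc ‖∫ t in Ioi r, Atheta2 ψ₁ ψ₂ t * Re2 ψ₃ ψ₄ t / t‖ₑ
      ≤ ∫⁻ t in Ioi r, ‖Atheta2 ψ₁ ψ₂ t * Re2 ψ₃ ψ₄ t / t‖ₑ := enorm_integral_le_lintegral_enorm _
    _ ≤ ∫⁻ t in Ioi r, c * ‖w₅ r‖ₑ * F t := setLIntegral_mono' measurableSet_Ioi hpt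
    _ = c * ‖w₅ r‖ₑ * ∫⁻ t in Ioi r, F t := lintegral_const_mul'' _ hF
    _ ≤ c * ‖w₅ r‖ₑ * ∫⁻ t in Ioi 0, F t := by gcongr
    _ ≤ c * ‖w₅ r‖ₑ
          * (ENNReal.ofReal (2 * Real.pi)⁻¹ * (weightedL2Norm w₃ ψ₃ * weightedL2Norm w₄ ψ₄)) := by
        gcongr; exact setLIntegral_enorm_mul_le hf₃ hf₄
    _ = _ := by ring

lemma enorm_N5_one_le (hw₁ : IsDecreasingWeight w₁) (hw₂ : IsDecreasingWeight w₂)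
    (hw₃ : IsDecreasingWeight w₃) (hw₄ : IsDecreasingWeight w₄)
    (hprod : ∀ r, 0 < r → w₁ r * w₂ r * w₃ r * w₄ r * w₅ r = (r ^ 2)⁻¹)
    (hf₁ : AEMeasurable (fun t => (w₁ t : ℂ) * ψ₁ t) (volume.restrict (Ioi 0)))
    (hf₂ : AEMeasurable (fun t => (w₂ t : ℂ) * ψ₂ t) (volume.restrict (Ioi 0)))
    (hf₃ : AEMeasurable (fun t => (w₃ t : ℂ) * ψ₃ t) (volume.restrict (Ioi 0)))
    (hf₄ : AEMeasurable (fun t => (w₄ t : ℂ) * ψ₄ t) (volume.restrict (Ioi 0)))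
    {r : ℝ} (hr : 0 < r) :
    ‖N5 1 ψ₁ ψ₂ ψ₃ ψ₄ ψ₅ r‖ₑ
      ≤ ENNReal.ofReal (4 * Real.pi)⁻¹ * (weightedL2Norm w₁ ψ₁ * weightedL2Norm w₂ ψ₂)
        * (ENNReal.ofReal (4 * Real.pi)⁻¹ * (weightedL2Norm w₃ ψ₃ * weightedL2Norm w₄ ψ₄))
        * ‖(w₅ r : ℂ) * ψ₅ r‖ₑ := by
  calc ‖N5 1 ψ₁ ψ₂ ψ₃ ψ₄ ψ₅ r‖ₑ
      = ‖w₁ r‖ₑ * ‖w₂ r‖ₑ * ‖Atheta2 ψ₁ ψ₂ r‖ₑ * (‖w₃ r‖ₑ * ‖w₄ r‖ₑ * ‖Atheta2 ψ₃ ψ₄ r‖ₑ)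
          * ‖(w₅ r : ℂ) * ψ₅ r‖ₑ := by
        rw [N5, div_eq_mul_inv, ← hprod r hr]
        simp only [enorm_mul, Complex.enorm_ofReal]
        ring
    _ ≤ _ := mul_le_mul' (mul_le_mul' (enorm_weight_mul_Atheta2_le hw₁ hw₂ hf₁ hf₂ hr)
          (enorm_weight_mul_Atheta2_le hw₃ hw₄ hf₃ hf₄ hr)) le_rfl

lemma enorm_N5_two_le (hw₁ : IsDecreasingWeight w₁) (hw₂ : IsDecreasingWeight w₂)
    (hw₅ : IsDecreasingWeight w₅)
    (hprod : ∀ r, 0 < r → w₁ r * w₂ r * w₃ r * w₄ r * w₅ r = (r ^ 2)⁻¹)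
    (hf₁ : AEMeasurable (fun t => (w₁ t : ℂ) * ψ₁ t) (volume.restrict (Ioi 0)))
    (hf₂ : AEMeasurable (fun t => (w₂ t : ℂ) * ψ₂ t) (volume.restrict (Ioi 0)))
    (hf₃ : AEMeasurable (fun t => (w₃ t : ℂ) * ψ₃ t) (volume.restrict (Ioi 0)))
    (hf₄ : AEMeasurable (fun t => (w₄ t : ℂ) * ψ₄ t) (volume.restrict (Ioi 0)))
    {r : ℝ} (hr : 0 < r) :
    ‖N5 2 ψ₁ ψ₂ ψ₃ ψ₄ ψ₅ r‖ₑ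
      ≤ ENNReal.ofReal (4 * Real.pi)⁻¹ * (weightedL2Norm w₁ ψ₁ * weightedL2Norm w₂ ψ₂)
        * (ENNReal.ofReal (2 * Real.pi)⁻¹ * (weightedL2Norm w₃ ψ₃ * weightedL2Norm w₄ ψ₄))
        * ‖(w₅ r : ℂ) * ψ₅ r‖ₑ := by
  show ‖-((∫ t in Ioi r, Atheta2 ψ₁ ψ₂ t * Re2 ψ₃ ψ₄ t / t : ℝ) : ℂ) * ψ₅ r‖ₑ ≤ _
  rw [enorm_mul, enorm_neg, Complex.enorm_ofReal, enorm_mul, Complex.enorm_ofReal, ← mul_assoc]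
  exact mul_le_mul' (enorm_integral_N5_two_le hw₁ hw₂ hw₅ hprod hf₁ hf₂ hf₃ hf₄ hr) le_rfl

lemma enorm_N5_le {k : ℕ} (hk : k = 1 ∨ k = 2) (hw₁ : IsDecreasingWeight w₁)
    (hw₂ : IsDecreasingWeight w₂) (hw₃ : IsDecreasingWeight w₃) (hw₄ : IsDecreasingWeight w₄)
    (hw₅ : IsDecreasingWeight w₅)
    (hprod : ∀ r, 0 < r → w₁ r * w₂ r * w₃ r * w₄ r * w₅ r = (r ^ 2)⁻¹)
    (hf₁ : AEMeasurable (fun t => (w₁ t : ℂ) * ψ₁ t) (volume.restrict (Ioi 0)))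
    (hf₂ : AEMeasurable (fun t => (w₂ t : ℂ) * ψ₂ t) (volume.restrict (Ioi 0)))
    (hf₃ : AEMeasurable (fun t => (w₃ t : ℂ) * ψ₃ t) (volume.restrict (Ioi 0)))
    (hf₄ : AEMeasurable (fun t => (w₄ t : ℂ) * ψ₄ t) (volume.restrict (Ioi 0)))
    {r : ℝ} (hr : 0 < r) :
    ‖N5 k ψ₁ ψ₂ ψ₃ ψ₄ ψ₅ r‖ₑ
      ≤ ENNReal.ofReal ((4 * Real.pi)⁻¹ * (2 * Real.pi)⁻¹)
        * (weightedL2Norm w₁ ψ₁ * weightedL2Norm w₂ ψ₂ * weightedL2Norm w₃ ψ₃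
          * weightedL2Norm w₄ ψ₄) * ‖(w₅ r : ℂ) * ψ₅ r‖ₑ := by
  have hconst : ENNReal.ofReal (4 * Real.pi)⁻¹ ≤ ENNReal.ofReal (2 * Real.pi)⁻¹ :=
    ENNReal.ofReal_le_ofReal (by gcongr; linarith [Real.pi_pos])
  rw [ENNReal.ofReal_mul (by positivity)]
  rcases hk with rfl | rfl
  · calc ‖N5 1 ψ₁ ψ₂ ψ₃ ψ₄ ψ₅ r‖ₑ
        ≤ ENNReal.ofReal (4 * Real.pi)⁻¹ * (weightedL2Norm w₁ ψ₁ * weightedL2Norm w₂ ψ₂)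
          * (ENNReal.ofReal (4 * Real.pi)⁻¹ * (weightedL2Norm w₃ ψ₃ * weightedL2Norm w₄ ψ₄))
          * ‖(w₅ r : ℂ) * ψ₅ r‖ₑ := enorm_N5_one_le hw₁ hw₂ hw₃ hw₄ hprod hf₁ hf₂ hf₃ hf₄ hr
      _ ≤ ENNReal.ofReal (4 * Real.pi)⁻¹ * (weightedL2Norm w₁ ψ₁ * weightedL2Norm w₂ ψ₂)
          * (ENNReal.ofReal (2 * Real.pi)⁻¹ * (weightedL2Norm w₃ ψ₃ * weightedL2Norm w₄ ψ₄))
          * ‖(w₅ r : ℂ) * ψ₅ r‖ₑ := by gcongr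
      _ = _ := by ring
  · exact (enorm_N5_two_le hw₁ hw₂ hw₅ hprod hf₁ hf₂ hf₃ hf₄ hr).trans_eq (by ring)

end Quintic

end QuinticEstimate

open QuinticEstimate in
/-- Nonlinear estimates (weighted `L²`-type) for `N_{5,k}`, `k ∈ {1,2}`. -/
theorem nonlinear_estimates_weightedL2_quintic :
    ∃ C : ℝ, 0 < C ∧
      ∀ (k : ℕ), (k = 1 ∨ k = 2) →
      ∀ w₁ w₂ w₃ w₄ w₅ : ℝ → ℝ,
        (∀ r : ℝ, 0 < r → 0 < w₁ r) → (∀ r : ℝ, 0 < r → 0 < w₂ r) →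
        (∀ r : ℝ, 0 < r → 0 < w₃ r) → (∀ r : ℝ, 0 < r → 0 < w₄ r) →
        (∀ r : ℝ, 0 < r → 0 < w₅ r) →
        (∀ r s : ℝ, 0 < r → r ≤ s → w₁ s ≤ w₁ r) →
        (∀ r s : ℝ, 0 < r → r ≤ s → w₂ s ≤ w₂ r) →
        (∀ r s : ℝ, 0 < r → r ≤ s → w₃ s ≤ w₃ r) →
        (∀ r s : ℝ, 0 < r → r ≤ s → w₄ s ≤ w₄ r) →
        (∀ r s : ℝ, 0 < r → r ≤ s → w₅ s ≤ w₅ r) →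
        (∀ r : ℝ, 0 < r → w₁ r * w₂ r * w₃ r * w₄ r * w₅ r = (r ^ 2)⁻¹) →
        ∀ ψ₁ ψ₂ ψ₃ ψ₄ ψ₅ : ℝ → ℂ,
          Measurable ψ₁ → Measurable ψ₂ → Measurable ψ₃ → Measurable ψ₄ →
          Measurable ψ₅ →
          eLpNorm (N5 k ψ₁ ψ₂ ψ₃ ψ₄ ψ₅) 2 rmeas ≤
            ENNReal.ofReal C
              * eLpNorm (fun r => ((w₁ r : ℝ) : ℂ) * ψ₁ r) 2 rmeas
              * eLpNorm (fun r => ((w₂ r : ℝ) : ℂ) * ψ₂ r) 2 rmeas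
              * eLpNorm (fun r => ((w₃ r : ℝ) : ℂ) * ψ₃ r) 2 rmeas
              * eLpNorm (fun r => ((w₄ r : ℝ) : ℂ) * ψ₄ r) 2 rmeas
              * eLpNorm (fun r => ((w₅ r : ℝ) : ℂ) * ψ₅ r) 2 rmeas := by
  refine ⟨(4 * Real.pi)⁻¹ * (2 * Real.pi)⁻¹, by positivity, ?_⟩
  intro k hk w₁ w₂ w₃ w₄ w₅ hp₁ hp₂ hp₃ hp₄ hp₅ ha₁ ha₂ ha₃ ha₄ ha₅ hprod ψ₁ ψ₂ ψ₃ ψ₄ ψ₅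
    hψ₁ hψ₂ hψ₃ hψ₄ hψ₅
  have hw₁ : IsDecreasingWeight w₁ := ⟨hp₁, fun r hr s _ hrs => ha₁ r s hr hrs⟩
  have hw₂ : IsDecreasingWeight w₂ := ⟨hp₂, fun r hr s _ hrs => ha₂ r s hr hrs⟩
  have hw₃ : IsDecreasingWeight w₃ := ⟨hp₃, fun r hr s _ hrs => ha₃ r s hr hrs⟩
  have hw₄ : IsDecreasingWeight w₄ := ⟨hp₄, fun r hr s _ hrs => ha₄ r s hr hrs⟩
  have hw₅ : IsDecreasingWeight w₅ := ⟨hp₅, fun r hr s _ hrs => ha₅ r s hr hrs⟩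
  have hpointwise := fun r (hr : 0 < r) => enorm_N5_le (ψ₅ := ψ₅) hk hw₁ hw₂ hw₃ hw₄ hw₅ hprod
    (hw₁.aemeasurable_mul hψ₁) (hw₂.aemeasurable_mul hψ₂) (hw₃.aemeasurable_mul hψ₃)
    (hw₄.aemeasurable_mul hψ₄) hr
  calc eLpNorm (N5 k ψ₁ ψ₂ ψ₃ ψ₄ ψ₅) 2 rmeas
      ≤ ENNReal.ofReal ((4 * Real.pi)⁻¹ * (2 * Real.pi)⁻¹)
          * (weightedL2Norm w₁ ψ₁ * weightedL2Norm w₂ ψ₂ * weightedL2Norm w₃ ψ₃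
            * weightedL2Norm w₄ ψ₄) * weightedL2Norm w₅ ψ₅ :=
        eLpNorm_le_mul_eLpNorm_of_ae_le_mul'' 2
          ((hw₅.aemeasurable_mul hψ₅).mono_ac rmeas_absolutelyContinuous).aestronglyMeasurable
          (ae_rmeas_pos.mono hpointwise)
    _ = _ := by simp only [weightedL2Norm]; ring
end
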